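/- Let M be a finite MDP with N states and A actions, and let π and π' be two Markov randomized policies with induced transition matrices P_π and P_{π'}. Then the induced-∞-norm of their difference satisfies ‖P_π − P_{π'}‖_∞ = max_i Σ_j |(P_π)_{ij} − (P_{π'})_{ij}| ≤ ρ(M, P_{π'}). -/

import Mathlib

/-!
Entrywise, `(P_π)_{ij}` is a convex combination of the `P(j | i, a)`, so it lies in the interval
`[P̲_{ij}, P̄_{ij}]` and hence within its half-width of the midpoint `c_{ij}`. The triangle
inequality through `c_{ij}` then gives
`|(P_π)_{ij} - Y_{ij}| ≤ (P̄_{ij} - P̲_{ij}) / 2 + |Y_{ij} - c_{ij}|` for any `Y`, in particular for `Y = P_{π'}`.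
-/

/-- ρ(M, Y) for an MDP with transition probabilities `P a i j = P(j | i, a)`. -/
noncomputable def rho {N A : ℕ} (P : Fin A → Fin N → Fin N → ℝ)
    (Y : Fin N → Fin N → ℝ) : ℝ :=
  ⨆ i, ∑ j, (((⨆ a, P a i j) - ⨅ a, P a i j) / 2 +
    |Y i j - ((⨆ a, P a i j) + (⨅ a, P a i j)) / 2|)

open Set

theorem sum_mul_mem_Icc_iInf_iSup {ι : Type*} [Fintype ι] {w f : ι → ℝ} (hw₀ : ∀ a, 0 ≤ w a)
    (hw₁ : ∑ a, w a = 1) : ∑ a, w a * f a ∈ Icc (⨅ a, f a) (⨆ a, f a) := by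
  simpa only [smul_eq_mul] using (convex_Icc _ _).sum_mem (fun a _ => hw₀ a) hw₁ fun a _ =>
    ⟨ciInf_le (finite_range f).bddBelow a, le_ciSup (finite_range f).bddAbove a⟩

theorem abs_sub_le_half_sub_add_abs_sub_midpoint {m M x : ℝ} (hx : x ∈ Icc m M) (y : ℝ) :
    |x - y| ≤ (M - m) / 2 + |y - (M + m) / 2| := by
  have hx_mid : |x - (M + m) / 2| ≤ (M - m) / 2 := by
    rw [abs_le]
    constructor <;> linarith [hx.1, hx.2]
  calc |x - y| ≤ |x - (M + m) / 2| + |(M + m) / 2 - y| := abs_sub_le _ _ _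
    _ ≤ (M - m) / 2 + |y - (M + m) / 2| := by rw [abs_sub_comm ((M + m) / 2)]; gcongr

theorem induced_diff_le_rho_general {N A : ℕ}
    (P : Fin A → Fin N → Fin N → ℝ)
    (pol : Fin N → Fin A → ℝ)
    (hpolnn : ∀ s a, 0 ≤ pol s a) (hpolrow : ∀ s, ∑ a, pol s a = 1)
    (Ppol Ppol' : Fin N → Fin N → ℝ)
    (hPpol : ∀ i j, Ppol i j = ∑ a, pol i a * P a i j) :
    (⨆ i, ∑ j, |Ppol i j - Ppol' i j|) ≤ rho P Ppol' := by
  refine ciSup_mono (finite_range _).bddAbove fun i => Finset.sum_le_sum fun j _ => ?_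
  have hmem : Ppol i j ∈ Icc (⨅ a, P a i j) (⨆ a, P a i j) :=
    hPpol i j ▸ sum_mul_mem_Icc_iInf_iSup (hpolnn i) (hpolrow i)
  exact abs_sub_le_half_sub_add_abs_sub_midpoint hmem (Ppol' i j)

/-- The ∞-norm of the difference of two induced transition matrices is at most
`ρ(M, P_{π'})`. -/
theorem induced_diff_le_rho {N A : ℕ} [NeZero N] [NeZero A]
    (P : Fin A → Fin N → Fin N → ℝ)
    (hPnn : ∀ a i j, 0 ≤ P a i j)
    (hProw : ∀ a i, ∑ j, P a i j = 1)
    (pol pol' : Fin N → Fin A → ℝ)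
    (hpolnn : ∀ s a, 0 ≤ pol s a) (hpolrow : ∀ s, ∑ a, pol s a = 1)
    (hpol'nn : ∀ s a, 0 ≤ pol' s a) (hpol'row : ∀ s, ∑ a, pol' s a = 1)
    (Ppol Ppol' : Fin N → Fin N → ℝ)
    (hPpol : ∀ i j, Ppol i j = ∑ a, pol i a * P a i j)
    (hPpol' : ∀ i j, Ppol' i j = ∑ a, pol' i a * P a i j) :
    (⨆ i, ∑ j, |Ppol i j - Ppol' i j|) ≤ rho P Ppol' :=
  induced_diff_le_rho_general P pol hpolnn hpolrow Ppol Ppol' hPpol
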